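/- arXiv:2410.12192 — 3 statements merged into one kernel-verified Lean document; each statement's English description precedes it below -/
import Mathlib

section
/- Let c be a rainbow-free coloring of [3]^3 using exactly 10 colors, and fix any coordinate t ∈ {1, 2, 3}, partitioning [3]^3 into layers L_1, L_2, L_3 with color sets C_1, C_2, C_3. Then there is a color c₀ such that C_i ∩ C_j = {c₀} for all i ≠ j, and |C_i| = 4 for each i; in particular, each layer contains exactly 3 colors that appear on no other layer, and all three layers share exactly one common color. -/
/-- The point of the combinatorial line with template `w` (where `none` plays the
role of `*`) obtained by substituting `i` for every `*`. -/
def linePoint {k n : ℕ} (w : Fin n → Option (Fin k)) (i : Fin k) : Fin n → Fin k :=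
  fun j => (w j).getD i

/-- `w` is a valid combinatorial-line template: it contains at least one `*`. -/
def IsLineTemplate {k n : ℕ} (w : Fin n → Option (Fin k)) : Prop :=
  ∃ j, w j = none

/-- The combinatorial line with template `w` is rainbow with respect to the
coloring `c`: its `k` points receive pairwise distinct colors. -/
def IsRainbowLine {k n : ℕ} {α : Type*} (c : (Fin n → Fin k) → α)
    (w : Fin n → Option (Fin k)) : Prop :=
  IsLineTemplate w ∧ Function.Injective fun i : Fin k => c (linePoint w i)

/-- A coloring of `[k]^n` is rainbow-free if no combinatorial line is rainbow. -/
def RainbowFree {k n : ℕ} {α : Type*} (c : (Fin n → Fin k) → α) : Prop :=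
  ∀ w, ¬ IsRainbowLine c w

/-- A coloring uses exactly `r` colors if its image has exactly `r` elements. -/
def UsesExactly {k n : ℕ} {α : Type*} (c : (Fin n → Fin k) → α) (r : ℕ) : Prop :=
  (Set.range c).ncard = r

/-- The anti-Hales-Jewett number: the least `r` such that every coloring of
`[k]^n` using exactly `r` colors contains a rainbow combinatorial line. -/
noncomputable def ah (k n : ℕ) : ℕ :=
  sInf {r | ∀ c : (Fin n → Fin k) → ℕ, UsesExactly c r → ∃ w, IsRainbowLine c w}

/-- The set of colors appearing on the layer `L_i` (points whose `t`-th letter is `i`). -/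
def layerColors {k n : ℕ} (c : (Fin n → Fin k) → ℕ) (t : Fin n) (i : Fin k) : Set ℕ :=
  c '' {v | v t = i}

lemma fin3_tri (t j : Fin 3) : j = t ∨ j = t + 1 ∨ j = t + 2 := by revert t j; decide
lemma fin3_ne (t : Fin 3) : t + 1 ≠ t ∧ t + 2 ≠ t ∧ t + 2 ≠ t + 1 := by revert t; decide
lemma fin3_012 : ∀ i : Fin 3, i = 0 ∨ i = 1 ∨ i = 2 := by decide

lemma third_exists : ∀ a b : Fin 3, a ≠ b →
    ∃ e : Fin 3, e ≠ a ∧ e ≠ b ∧ ∀ x : Fin 3, x = a ∨ x = b ∨ x = e := by decide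

lemma key2 (f : Fin 3 → Fin 3 → ℕ)
    (hrow : ∀ b : Fin 3, ∃ j1 j2 : Fin 3, j1 ≠ j2 ∧ f b j1 = f b j2)
    (hcol : ∀ j : Fin 3, ∃ b1 b2 : Fin 3, b1 ≠ b2 ∧ f b1 j = f b2 j) :
    (Finset.image (fun q : Fin 3 × Fin 3 => f q.1 q.2) Finset.univ).card ≤ 4 := by
  classical
  set D := Finset.image (fun q : Fin 3 × Fin 3 => f q.1 q.2) Finset.univ with hD
  set R : Fin 3 → Finset ℕ := fun b => Finset.image (f b) Finset.univ with hR
  have hmemR : ∀ b j, f b j ∈ R b := fun b j => Finset.mem_image_of_mem _ (Finset.mem_univ j)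
  have hRcard : ∀ b, (R b).card ≤ 2 := by
    intro b
    obtain ⟨j1, j2, hne, heq⟩ := hrow b
    have h1 : R b = Finset.image (f b) (Finset.univ.erase j1) := by
      have huniv : (Finset.univ : Finset (Fin 3)) = insert j1 (Finset.univ.erase j1) :=
        (Finset.insert_erase (Finset.mem_univ j1)).symm
      show Finset.image (f b) Finset.univ = _
      conv_lhs => rw [huniv]
      rw [Finset.image_insert]
      apply Finset.insert_eq_self.2
      exact heq ▸ Finset.mem_image_of_mem _ (Finset.mem_erase.2 ⟨hne.symm, Finset.mem_univ j2⟩)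
    calc (R b).card ≤ (Finset.univ.erase j1).card := h1 ▸ Finset.card_image_le
      _ ≤ 2 := by rw [Finset.card_erase_of_mem (Finset.mem_univ j1)]; simp
  have hRsubD : ∀ b, R b ⊆ D := by
    intro b x hx
    obtain ⟨j, _, rfl⟩ := Finset.mem_image.1 hx
    exact Finset.mem_image.2 ⟨(b, j), Finset.mem_univ _, rfl⟩
  by_contra hcon
  push_neg at hcon
  obtain ⟨a, b, hab, heqab⟩ := hcol 0
  obtain ⟨e, hea, heb, htri⟩ := third_exists a b hab
  have hDeq : D = (R a ∪ R b) ∪ R e := by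
    apply Finset.Subset.antisymm
    · intro x hx
      obtain ⟨⟨b', j⟩, _, rfl⟩ := Finset.mem_image.1 hx
      rcases htri b' with rfl | rfl | rfl
      · exact Finset.mem_union_left _ (Finset.mem_union_left _ (hmemR _ j))
      · exact Finset.mem_union_left _ (Finset.mem_union_right _ (hmemR _ j))
      · exact Finset.mem_union_right _ (hmemR _ j)
    · intro x hx
      rcases Finset.mem_union.1 hx with h | h
      · rcases Finset.mem_union.1 h with h | h
        exacts [hRsubD a h, hRsubD b h]
      · exact hRsubD e h
  have hx_mem : f a 0 ∈ R a ∩ R b := Finset.mem_inter.2 ⟨hmemR a 0, heqab ▸ hmemR b 0⟩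
  have c1 := Finset.card_union_add_card_inter (R a) (R b)
  have c2 := Finset.card_union_add_card_inter (R a ∪ R b) (R e)
  have hge1 : 1 ≤ (R a ∩ R b).card := Finset.card_pos.2 ⟨_, hx_mem⟩
  have hDcard : 5 ≤ ((R a ∪ R b) ∪ R e).card := hDeq ▸ hcon
  have hRa := hRcard a; have hRb := hRcard b; have hRe := hRcard e
  have hab1 : (R a ∩ R b).card = 1 := by omega
  have hdisj0 : ((R a ∪ R b) ∩ R e).card = 0 := by omega
  have hRa2 : (R a).card = 2 := by omega
  have hdisj : (R a ∪ R b) ∩ R e = ∅ := Finset.card_eq_zero.1 hdisj0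
  have hsing : ∀ y ∈ R a ∩ R b, y = f a 0 := by
    intro y hy
    obtain ⟨z, hz⟩ := Finset.card_eq_one.1 hab1
    rw [hz] at hy hx_mem
    rw [Finset.mem_singleton.1 hy, Finset.mem_singleton.1 hx_mem]
  have hcolx : ∀ j, f a j = f a 0 := by
    intro j
    obtain ⟨b1, b2, hne', heq'⟩ := hcol j
    have hm1 : f b1 j ∈ R b1 := hmemR _ _
    have hm2 : f b1 j ∈ R b2 := heq' ▸ hmemR _ _
    rcases htri b1 with rfl | rfl | rfl <;> rcases htri b2 with rfl | rfl | rfl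
    · exact absurd rfl hne'
    · exact hsing _ (Finset.mem_inter.2 ⟨hm1, hm2⟩)
    · exact absurd (hdisj ▸ Finset.mem_inter.2 ⟨Finset.mem_union_left _ hm1, hm2⟩)
        (Finset.notMem_empty _)
    · exact heq' ▸ hsing _ (Finset.mem_inter.2 ⟨hm2, hm1⟩)
    · exact absurd rfl hne'
    · exact absurd (hdisj ▸ Finset.mem_inter.2 ⟨Finset.mem_union_right _ hm1, hm2⟩)
        (Finset.notMem_empty _)
    · exact absurd (hdisj ▸ Finset.mem_inter.2 ⟨Finset.mem_union_left _ hm2, hm1⟩)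
        (Finset.notMem_empty _)
    · exact absurd (hdisj ▸ Finset.mem_inter.2 ⟨Finset.mem_union_right _ hm2, hm1⟩)
        (Finset.notMem_empty _)
    · exact absurd rfl hne'
  have hRsub : R a ⊆ {f a 0} := by
    intro y hy
    obtain ⟨j, _, rfl⟩ := Finset.mem_image.1 hy
    exact Finset.mem_singleton.2 (hcolx j)
  have := Finset.card_le_card hRsub
  simp at this
  omega

def mkPt (t : Fin 3) (a b d : Fin 3) : Fin 3 → Fin 3 :=
  fun j => if j = t then a else if j = t + 1 then b else d

lemma mkPt_t (t a b d : Fin 3) : mkPt t a b d t = a := by simp [mkPt]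
lemma mkPt_u (t a b d : Fin 3) : mkPt t a b d (t + 1) = b := by
  simp [mkPt, (fin3_ne t).1]
lemma mkPt_v (t a b d : Fin 3) : mkPt t a b d (t + 2) = d := by
  simp [mkPt, (fin3_ne t).2.1, (fin3_ne t).2.2]

lemma mkPt_eq (t : Fin 3) (p : Fin 3 → Fin 3) : mkPt t (p t) (p (t + 1)) (p (t + 2)) = p := by
  funext j
  rcases fin3_tri t j with h | h | h <;> rw [h]
  · exact mkPt_t ..
  · exact mkPt_u ..
  · exact mkPt_v ..

def wRow (t i b : Fin 3) : Fin 3 → Option (Fin 3) :=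
  fun j => if j = t then some i else if j = t + 1 then some b else none
def wCol (t i d : Fin 3) : Fin 3 → Option (Fin 3) :=
  fun j => if j = t then some i else if j = t + 1 then none else some d
def wVert (t b d : Fin 3) : Fin 3 → Option (Fin 3) :=
  fun j => if j = t then none else if j = t + 1 then some b else some d

lemma wRow_tmpl (t i b : Fin 3) : IsLineTemplate (wRow t i b) :=
  ⟨t + 2, by simp [wRow, (fin3_ne t).2.1, (fin3_ne t).2.2]⟩
lemma wCol_tmpl (t i d : Fin 3) : IsLineTemplate (wCol t i d) :=
  ⟨t + 1, by simp [wCol, (fin3_ne t).1]⟩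
lemma wVert_tmpl (t b d : Fin 3) : IsLineTemplate (wVert t b d) := ⟨t, by simp [wVert]⟩

lemma linePoint_wRow (t i b x : Fin 3) : linePoint (wRow t i b) x = mkPt t i b x := by
  funext j
  rcases fin3_tri t j with h | h | h <;> rw [h] <;>
    simp [linePoint, wRow, mkPt, (fin3_ne t).1, (fin3_ne t).2.1, (fin3_ne t).2.2]

lemma linePoint_wCol (t i d x : Fin 3) : linePoint (wCol t i d) x = mkPt t i x d := by
  funext j
  rcases fin3_tri t j with h | h | h <;> rw [h] <;>
    simp [linePoint, wCol, mkPt, (fin3_ne t).1, (fin3_ne t).2.1, (fin3_ne t).2.2]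

lemma linePoint_wVert (t b d x : Fin 3) : linePoint (wVert t b d) x = mkPt t x b d := by
  funext j
  rcases fin3_tri t j with h | h | h <;> rw [h] <;>
    simp [linePoint, wVert, mkPt, (fin3_ne t).1, (fin3_ne t).2.1, (fin3_ne t).2.2]

lemma notRainbow_pair {k n : ℕ} {α : Type*} (c : (Fin n → Fin k) → α) (hrf : RainbowFree c)
    (w : Fin n → Option (Fin k)) (hw : IsLineTemplate w) :
    ∃ i1 i2 : Fin k, i1 ≠ i2 ∧ c (linePoint w i1) = c (linePoint w i2) := by
  have h2 : ¬ Function.Injective fun i : Fin k => c (linePoint w i) :=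
    fun hinj => hrf w ⟨hw, hinj⟩
  rw [Function.not_injective_iff] at h2
  obtain ⟨a, b, h1, h2⟩ := h2
  exact ⟨a, b, h2, h1⟩

lemma aux_count (A B C' : Finset ℕ) (c₀ : ℕ) (hA : A.card = 4)
    (h1 : A ∩ B = {c₀}) (h2 : A ∩ C' = {c₀}) : (A \ (B ∪ C')).card = 3 := by
  have hc0A : c₀ ∈ A := by
    have : c₀ ∈ A ∩ B := h1 ▸ Finset.mem_singleton_self c₀
    exact Finset.mem_of_mem_inter_left this
  have he : A \ (B ∪ C') = A \ ({c₀} : Finset ℕ) := by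
    rw [← Finset.sdiff_inter_self_left A (B ∪ C'), Finset.inter_union_distrib_left,
      h1, h2, Finset.union_self]
  rw [he, Finset.card_sdiff_of_subset (Finset.singleton_subset_iff.2 hc0A), hA, Finset.card_singleton]

set_option maxHeartbeats 2000000 in
theorem stmt_10 (c : (Fin 3 → Fin 3) → ℕ) (hrf : RainbowFree c)
    (huse : UsesExactly c 10) (t : Fin 3) :
    ∃ c₀ : ℕ,
      (∀ i j : Fin 3, i ≠ j → layerColors c t i ∩ layerColors c t j = {c₀}) ∧
      (∀ i : Fin 3, (layerColors c t i).ncard = 4) ∧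
      (∀ i : Fin 3,
        (layerColors c t i \ ⋃ j ∈ ({i}ᶜ : Set (Fin 3)), layerColors c t j).ncard = 3) ∧
      (⋂ i : Fin 3, layerColors c t i) = {c₀} := by
  classical
  set f : Fin 3 → Fin 3 → Fin 3 → ℕ := fun i b d => c (mkPt t i b d) with hf
  have hrow : ∀ i b : Fin 3, ∃ d1 d2, d1 ≠ d2 ∧ f i b d1 = f i b d2 := by
    intro i b
    obtain ⟨x1, x2, hne, heq⟩ := notRainbow_pair c hrf (wRow t i b) (wRow_tmpl t i b)
    rw [linePoint_wRow, linePoint_wRow] at heq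
    exact ⟨x1, x2, hne, heq⟩
  have hcol : ∀ i d : Fin 3, ∃ b1 b2, b1 ≠ b2 ∧ f i b1 d = f i b2 d := by
    intro i d
    obtain ⟨x1, x2, hne, heq⟩ := notRainbow_pair c hrf (wCol t i d) (wCol_tmpl t i d)
    rw [linePoint_wCol, linePoint_wCol] at heq
    exact ⟨x1, x2, hne, heq⟩
  have hvert : ∀ b d : Fin 3, ∃ i1 i2, i1 ≠ i2 ∧ f i1 b d = f i2 b d := by
    intro b d
    obtain ⟨x1, x2, hne, heq⟩ := notRainbow_pair c hrf (wVert t b d) (wVert_tmpl t b d)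
    rw [linePoint_wVert, linePoint_wVert] at heq
    exact ⟨x1, x2, hne, heq⟩
  have hfeq : ∀ i b d, f i b d = c (mkPt t i b d) := fun _ _ _ => rfl
  set D : Fin 3 → Finset ℕ :=
    fun i => Finset.image (fun q : Fin 3 × Fin 3 => f i q.1 q.2) Finset.univ with hDdef
  have hmemD : ∀ i b d, f i b d ∈ D i :=
    fun i b d => Finset.mem_image.2 ⟨(b, d), Finset.mem_univ _, rfl⟩
  have hDmem : ∀ i x, x ∈ D i → ∃ b d, f i b d = x := by
    intro i x hx
    obtain ⟨⟨b, d⟩, _, rfl⟩ := Finset.mem_image.1 hx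
    exact ⟨b, d, rfl⟩
  have hDcard : ∀ i, (D i).card ≤ 4 := fun i => key2 (f i) (hrow i) (hcol i)
  have hL : ∀ i, layerColors c t i = ↑(D i) := by
    intro i
    ext x
    constructor
    · rintro ⟨p, hp, rfl⟩
      have hpe : mkPt t i (p (t + 1)) (p (t + 2)) = p := by
        rw [show i = p t from hp.symm]
        exact mkPt_eq t p
      have hm := hmemD i (p (t + 1)) (p (t + 2))
      rw [hfeq, hpe] at hm
      exact hm
    · intro hx
      obtain ⟨b, d, rfl⟩ := hDmem i x (Finset.mem_coe.1 hx)
      exact ⟨mkPt t i b d, mkPt_t t i b d, rfl⟩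
  have hEcard : (Finset.image c Finset.univ).card = 10 := by
    have hre : (Set.range c) = ↑(Finset.image c Finset.univ) := by
      rw [Finset.coe_image, Finset.coe_univ, Set.image_univ]
    rw [UsesExactly, hre, Set.ncard_coe_finset] at huse
    exact huse
  have hEsub : ∀ x ∈ Finset.image c Finset.univ, ∃ i, x ∈ D i := by
    intro x hx
    obtain ⟨p, _, rfl⟩ := Finset.mem_image.1 hx
    refine ⟨p t, ?_⟩
    have hm := hmemD (p t) (p (t + 1)) (p (t + 2))
    rw [hfeq, mkPt_eq] at hm
    exact hm
  have hDsubE : ∀ i, D i ⊆ Finset.image c Finset.univ := by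
    intro i x hx
    obtain ⟨b, d, rfl⟩ := hDmem i x hx
    exact Finset.mem_image.2 ⟨mkPt t i b d, Finset.mem_univ _, rfl⟩
  clear_value f D
  clear hf hDdef hfeq
  have hEeq : Finset.image c Finset.univ = (D 0 ∪ D 1) ∪ D 2 := by
    apply Finset.Subset.antisymm
    · intro x hx
      obtain ⟨i, hi⟩ := hEsub x hx
      rcases fin3_012 i with rfl | rfl | rfl
      · exact Finset.mem_union_left _ (Finset.mem_union_left _ hi)
      · exact Finset.mem_union_left _ (Finset.mem_union_right _ hi)
      · exact Finset.mem_union_right _ hi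
    · intro x hx
      rcases Finset.mem_union.1 hx with h | h
      · rcases Finset.mem_union.1 h with h | h
        exacts [hDsubE 0 h, hDsubE 1 h]
      · exact hDsubE 2 h
  have hpairne : ∀ a b : Fin 3, a ≠ b → (D a ∩ D b).Nonempty := by
    intro a b hab
    by_contra hcon
    rw [Finset.not_nonempty_iff_eq_empty] at hcon
    obtain ⟨e, hea, heb, htri⟩ := third_exists a b hab
    have hsub : ∀ i, D i ⊆ D a ∪ D b := by
      intro i x hx
      obtain ⟨b', d', rfl⟩ := hDmem i x hx
      rcases htri i with h | h | h
      · rw [h]; exact Finset.mem_union_left _ (hmemD a b' d')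
      · rw [h]; exact Finset.mem_union_right _ (hmemD b b' d')
      · rw [h]
        obtain ⟨i1, i2, hne, heq⟩ := hvert b' d'
        rcases htri i1 with h1 | h1 | h1 <;> rcases htri i2 with h2 | h2 | h2 <;>
          rw [h1, h2] at heq
        · exact absurd (h1.trans h2.symm) hne
        · exfalso
          have hm : f a b' d' ∈ D a ∩ D b := by
            refine Finset.mem_inter.2 ⟨hmemD a b' d', ?_⟩
            rw [heq]; exact hmemD b b' d'
          rw [hcon] at hm; exact Finset.notMem_empty _ hm
        · rw [← heq]; exact Finset.mem_union_left _ (hmemD a b' d')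
        · exfalso
          have hm : f a b' d' ∈ D a ∩ D b := by
            refine Finset.mem_inter.2 ⟨hmemD a b' d', ?_⟩
            rw [← heq]; exact hmemD b b' d'
          rw [hcon] at hm; exact Finset.notMem_empty _ hm
        · exact absurd (h1.trans h2.symm) hne
        · rw [← heq]; exact Finset.mem_union_right _ (hmemD b b' d')
        · rw [heq]; exact Finset.mem_union_left _ (hmemD a b' d')
        · rw [heq]; exact Finset.mem_union_right _ (hmemD b b' d')
        · exact absurd (h1.trans h2.symm) hne
    have hEsub2 : Finset.image c Finset.univ ⊆ D a ∪ D b := by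
      intro x hx
      obtain ⟨i, hi⟩ := hEsub x hx
      exact hsub i hi
    have h10 : 10 ≤ (D a ∪ D b).card := hEcard ▸ Finset.card_le_card hEsub2
    have := Finset.card_union_le (D a) (D b)
    have := hDcard a; have := hDcard b
    omega
  -- arithmetic
  have c01 := Finset.card_union_add_card_inter (D 0) (D 1)
  have c2 := Finset.card_union_add_card_inter (D 0 ∪ D 1) (D 2)
  have hdist : (D 0 ∪ D 1) ∩ D 2 = (D 0 ∩ D 2) ∪ (D 1 ∩ D 2) :=
    Finset.union_inter_distrib_right _ _ _
  have c3 := Finset.card_union_add_card_inter (D 0 ∩ D 2) (D 1 ∩ D 2)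
  have htr : (D 0 ∩ D 2) ∩ (D 1 ∩ D 2) = D 0 ∩ D 1 ∩ D 2 := by
    ext x
    simp only [Finset.mem_inter]
    constructor
    · rintro ⟨⟨h0, h2⟩, ⟨h1, -⟩⟩; exact ⟨⟨h0, h1⟩, h2⟩
    · rintro ⟨⟨h0, h1⟩, h2⟩; exact ⟨⟨h0, h2⟩, ⟨h1, h2⟩⟩
  rw [hdist] at c2
  rw [htr] at c3
  have hT01 : (D 0 ∩ D 1 ∩ D 2).card ≤ (D 0 ∩ D 1).card :=
    Finset.card_le_card Finset.inter_subset_left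
  have hT02 : (D 0 ∩ D 1 ∩ D 2).card ≤ (D 0 ∩ D 2).card := by
    apply Finset.card_le_card
    intro x hx
    simp only [Finset.mem_inter] at hx ⊢
    exact ⟨hx.1.1, hx.2⟩
  have hT12 : (D 0 ∩ D 1 ∩ D 2).card ≤ (D 1 ∩ D 2).card := by
    apply Finset.card_le_card
    intro x hx
    simp only [Finset.mem_inter] at hx ⊢
    exact ⟨hx.1.2, hx.2⟩
  have hne01 : 1 ≤ (D 0 ∩ D 1).card := Finset.card_pos.2 (hpairne 0 1 (by decide))
  have hne02 : 1 ≤ (D 0 ∩ D 2).card := Finset.card_pos.2 (hpairne 0 2 (by decide))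
  have hne12 : 1 ≤ (D 1 ∩ D 2).card := Finset.card_pos.2 (hpairne 1 2 (by decide))
  have hE10 : ((D 0 ∪ D 1) ∪ D 2).card = 10 := hEeq ▸ hEcard
  have hD0 := hDcard 0; have hD1 := hDcard 1; have hD2 := hDcard 2
  have hp01 : (D 0 ∩ D 1).card = 1 := by omega
  have hp02 : (D 0 ∩ D 2).card = 1 := by omega
  have hp12 : (D 1 ∩ D 2).card = 1 := by omega
  have hT1 : (D 0 ∩ D 1 ∩ D 2).card = 1 := by omega
  have hn0 : (D 0).card = 4 := by omega
  have hn1 : (D 1).card = 4 := by omega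
  have hn2 : (D 2).card = 4 := by omega
  obtain ⟨c₀, hc₀⟩ := Finset.card_eq_one.1 hT1
  have hc0T : c₀ ∈ D 0 ∩ D 1 ∩ D 2 := hc₀ ▸ Finset.mem_singleton_self c₀
  have hc0m : c₀ ∈ D 0 ∧ c₀ ∈ D 1 ∧ c₀ ∈ D 2 := by
    simp only [Finset.mem_inter] at hc0T
    exact ⟨hc0T.1.1, hc0T.1.2, hc0T.2⟩
  have hsingleton : ∀ S : Finset ℕ, S.card = 1 → c₀ ∈ S → S = {c₀} := by
    intro S hS hc
    obtain ⟨y, hy⟩ := Finset.card_eq_one.1 hS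
    rw [hy] at hc ⊢
    rw [Finset.mem_singleton.1 hc]
  have hs01 : D 0 ∩ D 1 = {c₀} :=
    hsingleton _ hp01 (Finset.mem_inter.2 ⟨hc0m.1, hc0m.2.1⟩)
  have hs02 : D 0 ∩ D 2 = {c₀} :=
    hsingleton _ hp02 (Finset.mem_inter.2 ⟨hc0m.1, hc0m.2.2⟩)
  have hs12 : D 1 ∩ D 2 = {c₀} :=
    hsingleton _ hp12 (Finset.mem_inter.2 ⟨hc0m.2.1, hc0m.2.2⟩)
  refine ⟨c₀, ?_, ?_, ?_, ?_⟩
  · intro i j hij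
    rw [hL, hL, ← Finset.coe_inter]
    have hDij : D i ∩ D j = {c₀} := by
      fin_cases i <;> fin_cases j <;>
        first
          | exact absurd rfl hij
          | exact hs01
          | exact hs02
          | exact hs12
          | (rw [Finset.inter_comm]; first | exact hs01 | exact hs02 | exact hs12)
    rw [hDij, Finset.coe_singleton]
  · intro i
    rw [hL, Set.ncard_coe_finset]
    fin_cases i
    exacts [hn0, hn1, hn2]
  · intro i
    have key : ∀ a b e : Fin 3, (∀ x : Fin 3, x ≠ a ↔ (x = b ∨ x = e)) →
        (⋃ j ∈ ({a}ᶜ : Set (Fin 3)), layerColors c t j) = ↑(D b) ∪ ↑(D e) := by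
      intro a b e hiff
      ext x
      simp only [Set.mem_iUnion, Set.mem_compl_iff, Set.mem_singleton_iff, Set.mem_union,
        exists_prop]
      constructor
      · rintro ⟨j, hj, hx⟩
        rcases (hiff j).1 hj with h | h <;> rw [h, hL] at hx
        · exact Or.inl hx
        · exact Or.inr hx
      · rintro (hx | hx)
        · exact ⟨b, (hiff b).2 (Or.inl rfl), (hL b).symm ▸ hx⟩
        · exact ⟨e, (hiff e).2 (Or.inr rfl), (hL e).symm ▸ hx⟩
    fin_cases i
    · show (layerColors c t 0 \ ⋃ j ∈ ({(0 : Fin 3)}ᶜ : Set (Fin 3)), layerColors c t j).ncard = 3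
      rw [key 0 1 2 (by decide), hL, ← Finset.coe_union, ← Finset.coe_sdiff,
        Set.ncard_coe_finset]
      exact aux_count _ _ _ c₀ hn0 hs01 hs02
    · show (layerColors c t 1 \ ⋃ j ∈ ({(1 : Fin 3)}ᶜ : Set (Fin 3)), layerColors c t j).ncard = 3
      rw [key 1 0 2 (by decide), hL, ← Finset.coe_union, ← Finset.coe_sdiff,
        Set.ncard_coe_finset]
      exact aux_count _ _ _ c₀ hn1 (by rw [Finset.inter_comm]; exact hs01) hs12
    · show (layerColors c t 2 \ ⋃ j ∈ ({(2 : Fin 3)}ᶜ : Set (Fin 3)), layerColors c t j).ncard = 3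
      rw [key 2 0 1 (by decide), hL, ← Finset.coe_union, ← Finset.coe_sdiff,
        Set.ncard_coe_finset]
      exact aux_count _ _ _ c₀ hn2 (by rw [Finset.inter_comm]; exact hs02)
        (by rw [Finset.inter_comm]; exact hs12)
  · have hI : (⋂ i : Fin 3, layerColors c t i) = ↑(D 0 ∩ D 1 ∩ D 2) := by
      ext x
      simp only [Set.mem_iInter, Finset.coe_inter, Set.mem_inter_iff, Finset.mem_coe]
      constructor
      · intro h
        have h0 := h 0; have h1 := h 1; have h2 := h 2
        rw [hL] at h0 h1 h2
        exact ⟨⟨h0, h1⟩, h2⟩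
      · rintro ⟨⟨h0, h1⟩, h2⟩ i
        rcases fin3_012 i with rfl | rfl | rfl <;> rw [hL] <;> assumption
    rw [hI, hc₀, Finset.coe_singleton]
end

section
/- Let c be a rainbow-free coloring of [3]^4 using exactly 27 colors, and fix any coordinate t ∈ {1, 2, 3, 4}, partitioning [3]^4 into layers L_1, L_2, L_3 with color sets C_1, C_2, C_3. Then for each i, the number of colors that appear on L_i but on no other layer is at most 9, i.e., |C_i \ (C_j ∪ C_h)| ≤ 9 where {i, j, h} = {1, 2, 3}. -/
lemma card_image_le_two {f : Fin 3 → ℕ} (h : ¬ Function.Injective f) :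
    (Finset.image f Finset.univ).card ≤ 2 := by
  rw [Function.not_injective_iff] at h
  obtain ⟨x, y, hfq, hxy⟩ := h
  have hsub : Finset.image f Finset.univ ⊆ Finset.image f (Finset.univ.erase y) := by
    intro z hz
    simp only [Finset.mem_image] at hz ⊢
    obtain ⟨w, -, rfl⟩ := hz
    by_cases hw : w = y
    · exact ⟨x, by simp [Finset.mem_erase, hxy], by rw [hw, ← hfq]⟩
    · exact ⟨w, by simp [Finset.mem_erase, hw], rfl⟩
  calc (Finset.image f Finset.univ).card
      ≤ (Finset.image f (Finset.univ.erase y)).card := Finset.card_le_card hsub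
    _ ≤ (Finset.univ.erase y).card := Finset.card_image_le
    _ ≤ 2 := by simp [Finset.card_erase_of_mem]

lemma core {β : Type} [Fintype β] [Nonempty β] (g : Fin 3 → β → ℕ) (M : ℕ) (hM : 2 ≤ M)
    (hlayer : ∀ m, (Finset.image (g m) Finset.univ).card ≤ M)
    (hcross : ∀ p, ¬ Function.Injective fun m => g m p) :
    (Finset.image (fun q : Fin 3 × β => g q.1 q.2) Finset.univ).card ≤ 3 * M - 2 := by
  classical
  set A : Fin 3 → Finset ℕ := fun m => Finset.image (g m) Finset.univ with hA
  have hUnion : (Finset.image (fun q : Fin 3 × β => g q.1 q.2) Finset.univ) = A 0 ∪ A 1 ∪ A 2 := by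
    ext x
    simp only [Finset.mem_image, Finset.mem_union, hA, Finset.mem_univ, true_and, Prod.exists]
    constructor
    · rintro ⟨m, p, rfl⟩
      fin_cases m
      · exact Or.inl (Or.inl ⟨p, rfl⟩)
      · exact Or.inl (Or.inr ⟨p, rfl⟩)
      · exact Or.inr ⟨p, rfl⟩
    · rintro ((⟨p, rfl⟩ | ⟨p, rfl⟩) | ⟨p, rfl⟩)
      · exact ⟨0, p, rfl⟩
      · exact ⟨1, p, rfl⟩
      · exact ⟨2, p, rfl⟩
  rw [hUnion]
  by_contra hcon
  push_neg at hcon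
  have hU : 3 * M - 1 ≤ (A 0 ∪ A 1 ∪ A 2).card := by omega
  have e1 : (A 0 ∪ A 1 ∪ A 2).card + ((A 0 ∪ A 1) ∩ A 2).card = (A 0 ∪ A 1).card + (A 2).card :=
    Finset.card_union_add_card_inter _ _
  have e2 : (A 0 ∪ A 1).card + (A 0 ∩ A 1).card = (A 0).card + (A 1).card :=
    Finset.card_union_add_card_inter _ _
  have e3 : (A 0 ∪ A 1) ∩ A 2 = (A 0 ∩ A 2) ∪ (A 1 ∩ A 2) := Finset.union_inter_distrib_right _ _ _
  rw [e3] at e1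
  have h0 : (A 0).card ≤ M := hlayer 0
  have h1 : (A 1).card ≤ M := hlayer 1
  have h2 : (A 2).card ≤ M := hlayer 2
  have hbound : (A 0 ∩ A 1).card + ((A 0 ∩ A 2) ∪ (A 1 ∩ A 2)).card ≤ 1 := by omega
  -- D: possible shared values
  set D : Finset ℕ := (A 0 ∩ A 1) ∪ ((A 0 ∩ A 2) ∪ (A 1 ∩ A 2)) with hD
  have hDcard : D.card ≤ 1 := le_trans (Finset.card_union_le _ _) hbound
  have huniq : ∀ x ∈ D, ∀ y ∈ D, x = y := Finset.card_le_one.1 hDcard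
  have hT : ∀ x : ℕ, x ∈ A 0 → x ∈ A 1 → x ∈ A 2 → False := by
    intro x hx0 hx1 hx2
    have c1 : 1 ≤ (A 0 ∩ A 1).card :=
      Finset.card_pos.mpr ⟨x, Finset.mem_inter.2 ⟨hx0, hx1⟩⟩
    have c2 : 1 ≤ ((A 0 ∩ A 2) ∪ (A 1 ∩ A 2)).card :=
      Finset.card_pos.mpr ⟨x, Finset.mem_union_left _ (Finset.mem_inter.2 ⟨hx0, hx2⟩)⟩
    omega
  have hmemA : ∀ m p, g m p ∈ A m := fun m p => Finset.mem_image.2 ⟨p, Finset.mem_univ _, rfl⟩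
  have key : ∀ p : β, (g 0 p = g 1 p) ∨ (g 0 p = g 2 p) ∨ (g 1 p = g 2 p) := by
    intro p
    have hc := hcross p
    rw [Function.not_injective_iff] at hc
    obtain ⟨x, y, hv, hxy⟩ := hc
    fin_cases x <;> fin_cases y <;>
      first
        | exact absurd rfl hxy
        | exact Or.inl hv
        | exact Or.inl hv.symm
        | exact Or.inr (Or.inl hv)
        | exact Or.inr (Or.inl hv.symm)
        | exact Or.inr (Or.inr hv)
        | exact Or.inr (Or.inr hv.symm)
  have keyD : ∀ p : β, g 0 p ∈ D ∨ g 1 p ∈ D := by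
    intro p
    rcases key p with h | h | h
    · exact Or.inl (Finset.mem_union_left _ (Finset.mem_inter.2 ⟨hmemA 0 p, h ▸ hmemA 1 p⟩))
    · exact Or.inl (Finset.mem_union_right _ (Finset.mem_union_left _
        (Finset.mem_inter.2 ⟨hmemA 0 p, h ▸ hmemA 2 p⟩)))
    · exact Or.inr (Finset.mem_union_right _ (Finset.mem_union_right _
        (Finset.mem_inter.2 ⟨hmemA 1 p, h ▸ hmemA 2 p⟩)))
  have hallD : ∀ p : β, (g 0 p = g 1 p ∧ g 0 p ∈ D) ∨ (g 0 p = g 2 p ∧ g 0 p ∈ D) ∨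
      (g 1 p = g 2 p ∧ g 1 p ∈ D) := by
    intro p
    rcases key p with h | h | h
    · exact Or.inl ⟨h, Finset.mem_union_left _ (Finset.mem_inter.2 ⟨hmemA 0 p, h ▸ hmemA 1 p⟩)⟩
    · exact Or.inr (Or.inl ⟨h, Finset.mem_union_right _ (Finset.mem_union_left _
        (Finset.mem_inter.2 ⟨hmemA 0 p, h ▸ hmemA 2 p⟩))⟩)
    · exact Or.inr (Or.inr ⟨h, Finset.mem_union_right _ (Finset.mem_union_right _
        (Finset.mem_inter.2 ⟨hmemA 1 p, h ▸ hmemA 2 p⟩))⟩)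
  have p0 : β := Classical.arbitrary β
  obtain ⟨σ, hσD⟩ : ∃ σ, σ ∈ D := by
    rcases hallD p0 with h | h | h <;> exact ⟨_, h.2⟩
  have hall : ∀ p : β, (g 0 p = σ ∧ g 1 p = σ) ∨ (g 0 p = σ ∧ g 2 p = σ) ∨
      (g 1 p = σ ∧ g 2 p = σ) := by
    intro p
    rcases hallD p with ⟨he, hm⟩ | ⟨he, hm⟩ | ⟨he, hm⟩
    · exact Or.inl ⟨huniq _ hm _ hσD, he.symm.trans (huniq _ hm _ hσD)⟩
    · exact Or.inr (Or.inl ⟨huniq _ hm _ hσD, he.symm.trans (huniq _ hm _ hσD)⟩)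
    · exact Or.inr (Or.inr ⟨huniq _ hm _ hσD, he.symm.trans (huniq _ hm _ hσD)⟩)
  have hcardU : (A 0 ∪ A 1 ∪ A 2).card ≤ 3 * M - 2 → False := fun h => by omega
  by_cases hc0 : ∀ p, g 0 p = σ
  · have hA0 : A 0 = {σ} := by
      apply Finset.eq_singleton_iff_unique_mem.2
      refine ⟨hc0 p0 ▸ hmemA 0 p0, ?_⟩
      intro x hx
      obtain ⟨p, -, rfl⟩ := Finset.mem_image.1 hx
      exact hc0 p
    have hσ12 : σ ∈ A 1 ∪ A 2 := by
      rcases hall p0 with ⟨-, h⟩ | ⟨-, h⟩ | ⟨h, -⟩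
      · exact Finset.mem_union_left _ (h ▸ hmemA 1 p0)
      · exact Finset.mem_union_right _ (h ▸ hmemA 2 p0)
      · exact Finset.mem_union_left _ (h ▸ hmemA 1 p0)
    have hsub : A 0 ∪ A 1 ∪ A 2 ⊆ A 1 ∪ A 2 := by
      intro x hx
      rcases Finset.mem_union.1 hx with hx' | hx'
      · rcases Finset.mem_union.1 hx' with hx'' | hx''
        · rw [hA0, Finset.mem_singleton] at hx''
          exact hx'' ▸ hσ12
        · exact Finset.mem_union_left _ hx''
      · exact Finset.mem_union_right _ hx'
    have hle := Finset.card_le_card hsub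
    have hun := Finset.card_union_le (A 1) (A 2)
    omega
  · push_neg at hc0
    obtain ⟨p, hp⟩ := hc0
    have h12 : g 1 p = σ ∧ g 2 p = σ := by
      rcases hall p with ⟨h, -⟩ | ⟨h, -⟩ | ⟨h1, h2⟩
      · exact absurd h hp
      · exact absurd h hp
      · exact ⟨h1, h2⟩
    by_cases hc1 : ∀ q, g 1 q = σ
    · have hA1 : A 1 = {σ} := by
        apply Finset.eq_singleton_iff_unique_mem.2
        refine ⟨hc1 p0 ▸ hmemA 1 p0, ?_⟩
        intro x hx
        obtain ⟨q, -, rfl⟩ := Finset.mem_image.1 hx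
        exact hc1 q
      have hσ02 : σ ∈ A 0 ∪ A 2 := by
        rcases hall p0 with ⟨h, -⟩ | ⟨h, -⟩ | ⟨-, h⟩
        · exact Finset.mem_union_left _ (h ▸ hmemA 0 p0)
        · exact Finset.mem_union_left _ (h ▸ hmemA 0 p0)
        · exact Finset.mem_union_right _ (h ▸ hmemA 2 p0)
      have hsub : A 0 ∪ A 1 ∪ A 2 ⊆ A 0 ∪ A 2 := by
        intro x hx
        rcases Finset.mem_union.1 hx with hx' | hx'
        · rcases Finset.mem_union.1 hx' with hx'' | hx''
          · exact Finset.mem_union_left _ hx''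
          · rw [hA1, Finset.mem_singleton] at hx''
            exact hx'' ▸ hσ02
        · exact Finset.mem_union_right _ hx'
      have hle := Finset.card_le_card hsub
      have hun := Finset.card_union_le (A 0) (A 2)
      omega
    · push_neg at hc1
      obtain ⟨q, hq⟩ := hc1
      have h0q : g 0 q = σ := by
        rcases hall q with ⟨h, h'⟩ | ⟨h, -⟩ | ⟨h, -⟩
        · exact absurd h' hq
        · exact h
        · exact absurd h hq
      exact hT σ (h0q ▸ hmemA 0 q) (h12.1 ▸ hmemA 1 p) (h12.2 ▸ hmemA 2 p)

def mk4 (t s u r : Fin 4) (a b d e : Fin 3) : Fin 4 → Fin 3 :=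
  fun x => if x = t then a else if x = s then b else if x = u then d else e

section
variable {t s u r : Fin 4} {a b d e : Fin 3}

lemma mk4_t : mk4 t s u r a b d e t = a := by simp [mk4]

lemma mk4_s (hst : s ≠ t) : mk4 t s u r a b d e s = b := by simp [mk4, hst]

lemma mk4_u (hut : u ≠ t) (hus : u ≠ s) : mk4 t s u r a b d e u = d := by
  simp [mk4, hut, hus]

lemma mk4_r (hrt : r ≠ t) (hrs : r ≠ s) (hru : r ≠ u) : mk4 t s u r a b d e r = e := by
  simp [mk4, hrt, hrs, hru]

lemma mk4_eval (hst : s ≠ t) (hut : u ≠ t) (hus : u ≠ s)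
    (hrt : r ≠ t) (hrs : r ≠ s) (hru : r ≠ u)
    (hcov : ∀ x : Fin 4, x = t ∨ x = s ∨ x = u ∨ x = r) (v : Fin 4 → Fin 3) :
    mk4 t s u r (v t) (v s) (v u) (v r) = v := by
  funext x
  rcases hcov x with rfl | rfl | rfl | rfl
  · exact mk4_t
  · exact mk4_s hst
  · exact mk4_u hut hus
  · exact mk4_r hrt hrs hru

variable {c : (Fin 4 → Fin 3) → ℕ}

lemma noninj_t (hrf : RainbowFree c) (b d e : Fin 3) :
    ¬ Function.Injective (fun m => c (mk4 t s u r m b d e)) := by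
  set w : Fin 4 → Option (Fin 3) :=
    fun x => if x = t then none else some (mk4 t s u r 0 b d e x) with hw
  have hlp : ∀ m, linePoint w m = mk4 t s u r m b d e := by
    intro m
    funext x
    by_cases hx : x = t
    · subst hx; simp [linePoint, hw, mk4]
    · simp [linePoint, hw, hx, mk4]
  intro hinj
  exact hrf w ⟨⟨t, by simp [hw]⟩, by simpa only [hlp] using hinj⟩

lemma noninj_s (hrf : RainbowFree c) (hst : s ≠ t) (a d e : Fin 3) :
    ¬ Function.Injective (fun m => c (mk4 t s u r a m d e)) := by
  set w : Fin 4 → Option (Fin 3) :=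
    fun x => if x = s then none else some (mk4 t s u r a 0 d e x) with hw
  have hlp : ∀ m, linePoint w m = mk4 t s u r a m d e := by
    intro m
    funext x
    by_cases hx : x = s
    · subst hx; simp [linePoint, hw, mk4, hst]
    · simp [linePoint, hw, hx, mk4]
  intro hinj
  exact hrf w ⟨⟨s, by simp [hw]⟩, by simpa only [hlp] using hinj⟩

lemma noninj_u (hrf : RainbowFree c) (hut : u ≠ t) (hus : u ≠ s) (a b e : Fin 3) :
    ¬ Function.Injective (fun m => c (mk4 t s u r a b m e)) := by
  set w : Fin 4 → Option (Fin 3) :=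
    fun x => if x = u then none else some (mk4 t s u r a b 0 e x) with hw
  have hlp : ∀ m, linePoint w m = mk4 t s u r a b m e := by
    intro m
    funext x
    by_cases hx : x = u
    · subst hx; simp [linePoint, hw, mk4, hut, hus]
    · simp [linePoint, hw, hx, mk4]
  intro hinj
  exact hrf w ⟨⟨u, by simp [hw]⟩, by simpa only [hlp] using hinj⟩

lemma noninj_r (hrf : RainbowFree c) (hrt : r ≠ t) (hrs : r ≠ s) (hru : r ≠ u)
    (hcov : ∀ x : Fin 4, x = t ∨ x = s ∨ x = u ∨ x = r) (a b d : Fin 3) :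
    ¬ Function.Injective (fun m => c (mk4 t s u r a b d m)) := by
  set w : Fin 4 → Option (Fin 3) :=
    fun x => if x = r then none else some (mk4 t s u r a b d 0 x) with hw
  have hlp : ∀ m, linePoint w m = mk4 t s u r a b d m := by
    intro m
    funext x
    by_cases hx : x = r
    · subst hx; simp [linePoint, hw, mk4, hrt, hrs, hru]
    · rcases hcov x with rfl | rfl | rfl | rfl
      · simp [linePoint, hw, hx, mk4]
      · simp [linePoint, hw, hx, mk4]
      · simp [linePoint, hw, hx, mk4]
      · exact absurd rfl hx
  intro hinj
  exact hrf w ⟨⟨r, by simp [hw]⟩, by simpa only [hlp] using hinj⟩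

end

def KtF (c : (Fin 4 → Fin 3) → ℕ) (t s u r : Fin 4) (a : Fin 3) : Finset ℕ :=
  Finset.image (fun x : Fin 3 × Fin 3 × Fin 3 => c (mk4 t s u r a x.1 x.2.1 x.2.2)) Finset.univ

section
variable {t s u r : Fin 4} {c : (Fin 4 → Fin 3) → ℕ}

set_option maxHeartbeats 2000000 in
lemma KtF_card (hrf : RainbowFree c) (hst : s ≠ t) (hut : u ≠ t) (hus : u ≠ s)
    (hrt : r ≠ t) (hrs : r ≠ s) (hru : r ≠ u)
    (hcov : ∀ x : Fin 4, x = t ∨ x = s ∨ x = u ∨ x = r) (a : Fin 3) :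
    (KtF c t s u r a).card ≤ 10 := by
  have h4 : ∀ b : Fin 3,
      (Finset.image (fun q : Fin 3 × Fin 3 => c (mk4 t s u r a b q.1 q.2)) Finset.univ).card ≤ 4 := by
    intro b
    have hc := core (β := Fin 3) (fun d e => c (mk4 t s u r a b d e)) 2 (le_refl 2)
      (fun d => card_image_le_two (noninj_r hrf hrt hrs hru hcov a b d))
      (fun e => noninj_u hrf hut hus a b e)
    exact hc
  have hc := core (β := Fin 3 × Fin 3) (fun b p => c (mk4 t s u r a b p.1 p.2)) 4 (by norm_num)
    h4 (fun p : Fin 3 × Fin 3 => noninj_s hrf hst a p.1 p.2)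
  exact hc

lemma layer_eq (hst : s ≠ t) (hut : u ≠ t) (hus : u ≠ s)
    (hrt : r ≠ t) (hrs : r ≠ s) (hru : r ≠ u)
    (hcov : ∀ x : Fin 4, x = t ∨ x = s ∨ x = u ∨ x = r) (a : Fin 3) :
    layerColors c t a = ↑(KtF c t s u r a) := by
  ext x
  constructor
  · rintro ⟨v, hv, rfl⟩
    refine Finset.mem_coe.2 (Finset.mem_image.2 ⟨(v s, v u, v r), Finset.mem_univ _, ?_⟩)
    have h := mk4_eval hst hut hus hrt hrs hru hcov v
    rw [show (v t) = a from hv] at h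
    rw [h]
  · intro hx
    obtain ⟨⟨b, d, e⟩, -, rfl⟩ := Finset.mem_image.1 (Finset.mem_coe.1 hx)
    exact ⟨mk4 t s u r a b d e, mk4_t, rfl⟩

end

set_option maxHeartbeats 1000000 in
theorem master (c : (Fin 4 → Fin 3) → ℕ) (hrf : RainbowFree c) (huse : UsesExactly c 27)
    (t s u r : Fin 4) (hst : s ≠ t) (hut : u ≠ t) (hus : u ≠ s)
    (hrt : r ≠ t) (hrs : r ≠ s) (hru : r ≠ u)
    (hcov : ∀ x : Fin 4, x = t ∨ x = s ∨ x = u ∨ x = r) :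
    ∀ i : Fin 3,
      (layerColors c t i \ ⋃ j ∈ ({i}ᶜ : Set (Fin 3)), layerColors c t j).ncard ≤ 9 := by
  intro i
  obtain ⟨j, h, hij, hih, hjh0, hcov3⟩ :
      ∃ j h : Fin 3, j ≠ i ∧ h ≠ i ∧ j ≠ h ∧ ∀ m : Fin 3, m = i ∨ m = j ∨ m = h := by
    revert i; decide
  have hcard27 : (Finset.image c Finset.univ).card = 27 := by
    have hr : Set.range c = ↑(Finset.image c Finset.univ) := by
      rw [Finset.coe_image, Finset.coe_univ, Set.image_univ]
    rw [UsesExactly, hr, Set.ncard_coe_finset] at huse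
    exact huse
  have hle : ∀ a : Fin 3, layerColors c t a = ↑(KtF c t s u r a) :=
    layer_eq hst hut hus hrt hrs hru hcov
  have hUeq : (⋃ m ∈ ({i}ᶜ : Set (Fin 3)), layerColors c t m)
      = ↑(KtF c t s u r j ∪ KtF c t s u r h) := by
    ext x
    simp only [Set.mem_iUnion, Set.mem_compl_iff, Set.mem_singleton_iff, exists_prop,
      Finset.coe_union, Set.mem_union, hle, Finset.mem_coe]
    constructor
    · rintro ⟨m, hm, hx⟩
      rcases hcov3 m with rfl | rfl | rfl
      · exact absurd rfl hm
      · exact Or.inl hx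
      · exact Or.inr hx
    · rintro (hx | hx)
      · exact ⟨j, hij, hx⟩
      · exact ⟨h, hih, hx⟩
  rw [hle i, hUeq, ← Finset.coe_sdiff, Set.ncard_coe_finset]
  by_contra h9
  push_neg at h9
  have hsub : KtF c t s u r i \ (KtF c t s u r j ∪ KtF c t s u r h) ⊆ KtF c t s u r i :=
    Finset.sdiff_subset
  have hKi := KtF_card hrf hst hut hus hrt hrs hru hcov i
  have hKj := KtF_card hrf hst hut hus hrt hrs hru hcov j
  have hE : KtF c t s u r i \ (KtF c t s u r j ∪ KtF c t s u r h) = KtF c t s u r i :=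
    Finset.eq_of_subset_of_card_le hsub (by omega)
  have hdisj : ∀ x ∈ KtF c t s u r i, x ∉ KtF c t s u r j ∧ x ∉ KtF c t s u r h := by
    intro x hx
    rw [← hE] at hx
    have h2 := (Finset.mem_sdiff.1 hx).2
    rw [Finset.mem_union] at h2
    exact ⟨fun hc1 => h2 (Or.inl hc1), fun hc2 => h2 (Or.inr hc2)⟩
  have hmemK : ∀ (m : Fin 3) b d e, c (mk4 t s u r m b d e) ∈ KtF c t s u r m :=
    fun m b d e => Finset.mem_image.2 ⟨(b, d, e), Finset.mem_univ _, rfl⟩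
  have hjh : ∀ b d e : Fin 3, c (mk4 t s u r j b d e) = c (mk4 t s u r h b d e) := by
    intro b d e
    have hni := noninj_t (t := t) (s := s) (u := u) (r := r) hrf b d e
    rw [Function.not_injective_iff] at hni
    obtain ⟨x, y, hv, hxy⟩ := hni
    have hnoti : ∀ m : Fin 3, m ≠ i →
        c (mk4 t s u r i b d e) ≠ c (mk4 t s u r m b d e) := by
      intro m hm heq
      rcases hcov3 m with hm' | hm' | hm'
      · exact hm hm'
      · rw [hm'] at heq
        exact (hdisj _ (hmemK i b d e)).1 (by rw [heq]; exact hmemK j b d e)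
      · rw [hm'] at heq
        exact (hdisj _ (hmemK i b d e)).2 (by rw [heq]; exact hmemK h b d e)
    rcases hcov3 x with hx | hx | hx <;> rcases hcov3 y with hy | hy | hy
    · exact absurd (hx.trans hy.symm) hxy
    · rw [hx, hy] at hv; exact absurd hv (hnoti j hij)
    · rw [hx, hy] at hv; exact absurd hv (hnoti h hih)
    · rw [hx, hy] at hv; exact absurd hv.symm (hnoti j hij)
    · exact absurd (hx.trans hy.symm) hxy
    · rw [hx, hy] at hv; exact hv
    · rw [hx, hy] at hv; exact absurd hv.symm (hnoti h hih)
    · rw [hx, hy] at hv; exact hv.symm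
    · exact absurd (hx.trans hy.symm) hxy
  have hsubJH : Finset.image c Finset.univ ⊆ KtF c t s u r i ∪ KtF c t s u r j := by
    intro x hx
    obtain ⟨v, -, rfl⟩ := Finset.mem_image.1 hx
    have hv : mk4 t s u r (v t) (v s) (v u) (v r) = v := mk4_eval hst hut hus hrt hrs hru hcov v
    rcases hcov3 (v t) with hvt | hvt | hvt
    · exact Finset.mem_union_left _ (by rw [← hv, hvt]; exact hmemK i _ _ _)
    · exact Finset.mem_union_right _ (by rw [← hv, hvt]; exact hmemK j _ _ _)
    · exact Finset.mem_union_right _ (by rw [← hv, hvt, ← hjh]; exact hmemK j _ _ _)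
  have hle2 := Finset.card_le_card hsubJH
  have hun := Finset.card_union_le (KtF c t s u r i) (KtF c t s u r j)
  omega

theorem stmt_13 (c : (Fin 4 → Fin 3) → ℕ) (hrf : RainbowFree c)
    (huse : UsesExactly c 27) (t : Fin 4) :
    ∀ i : Fin 3,
      (layerColors c t i \ ⋃ j ∈ ({i}ᶜ : Set (Fin 3)), layerColors c t j).ncard ≤ 9 := by
  fin_cases t
  · exact master c hrf huse 0 1 2 3 (by decide) (by decide) (by decide) (by decide)
      (by decide) (by decide) (by decide)
  · exact master c hrf huse 1 0 2 3 (by decide) (by decide) (by decide) (by decide)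
      (by decide) (by decide) (by decide)
  · exact master c hrf huse 2 0 1 3 (by decide) (by decide) (by decide) (by decide)
      (by decide) (by decide) (by decide)
  · exact master c hrf huse 3 0 1 2 (by decide) (by decide) (by decide) (by decide)
      (by decide) (by decide) (by decide)
end

section
/- Let c be a rainbow-free coloring of [3]^4 using exactly 27 colors, and fix any coordinate t ∈ {1, 2, 3, 4}, partitioning [3]^4 into layers L_1, L_2, L_3 with color sets C_1, C_2, C_3. Then all three layers share exactly one common color: |C_1 ∩ C_2 ∩ C_3| = 1. -/
open Finset

namespace AHJ15

abbrev Pt (m : ℕ) := Fin m → Fin 3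

def ins {n : ℕ} (t : Fin (n+1)) (i : Fin 3) (u : Pt n) : Pt (n+1) :=
  Fin.insertNth (α := fun _ => Fin 3) t i u

@[simp] lemma ins_apply_self {n} (t : Fin (n+1)) (i : Fin 3) (u : Pt n) : ins t i u t = i := by
  simp [ins]

@[simp] lemma ins_apply_succAbove {n} (t : Fin (n+1)) (i : Fin 3) (u : Pt n) (j : Fin n) :
    ins t i u (t.succAbove j) = u j := by simp [ins]

lemma ins_removeNth {n} (t : Fin (n+1)) (v : Pt (n+1)) : ins t (v t) (t.removeNth v) = v := by
  simp [ins]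

def res {n : ℕ} (c : Pt (n+1) → ℕ) (t : Fin (n+1)) (i : Fin 3) : Pt n → ℕ :=
  fun u => c (ins t i u)

def colors {m : ℕ} (c : Pt m → ℕ) : Finset ℕ := Finset.image c Finset.univ

def cells {m : ℕ} (c : Pt m → ℕ) (a : ℕ) : Finset (Pt m) := Finset.univ.filter (fun v => c v = a)

lemma mem_colors {m} {c : Pt m → ℕ} {x} : x ∈ colors c ↔ ∃ v, c v = x := by
  simp [colors, eq_comm]

lemma mem_colors_of_cells {m} {c : Pt m → ℕ} {x} (h : 1 ≤ (cells c x).card) : x ∈ colors c := by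
  obtain ⟨v, hv⟩ := Finset.card_pos.1 h
  simp only [cells, mem_filter] at hv
  exact mem_colors.2 ⟨v, hv.2⟩

lemma one_le_cells {m} {c : Pt m → ℕ} {x} (h : x ∈ colors c) : 1 ≤ (cells c x).card := by
  obtain ⟨v, hv⟩ := mem_colors.1 h
  exact Finset.card_pos.2 ⟨v, by simp [cells, hv]⟩

lemma fin3_cases (z : Fin 3) : z = 0 ∨ z = 1 ∨ z = 2 := by omega

lemma fin3_cover {i j k : Fin 3} (z : Fin 3) (hij : i ≠ j) (hik : i ≠ k) (hjk : j ≠ k) :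
    z = i ∨ z = j ∨ z = k := by omega

lemma linePoint_insertNth {n} (t : Fin (n+1)) (i : Fin 3) (w : Fin n → Option (Fin 3)) (j : Fin 3) :
    linePoint (Fin.insertNth (α := fun _ => Option (Fin 3)) t (some i) w) j
      = ins t i (linePoint w j) := by
  funext x
  rcases eq_or_ne x t with rfl | hx
  · simp [linePoint, ins]
  · obtain ⟨y, rfl⟩ := Fin.exists_succAbove_eq hx
    simp [linePoint, ins]

lemma rf_res {n} {c : Pt (n+1) → ℕ} (h : RainbowFree c) (t : Fin (n+1)) (i : Fin 3) :
    RainbowFree (res c t i) := by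
  intro w hw
  obtain ⟨⟨j0, hj0⟩, hinj⟩ := hw
  apply h (Fin.insertNth (α := fun _ => Option (Fin 3)) t (some i) w)
  constructor
  · exact ⟨t.succAbove j0, by simp [hj0]⟩
  · intro x y hxy
    apply hinj
    simpa [res, linePoint_insertNth] using hxy

lemma column {n} {c : Pt (n+1) → ℕ} (h : RainbowFree c) (t : Fin (n+1)) (u : Pt n) :
    ∃ i j : Fin 3, i ≠ j ∧ c (ins t i u) = c (ins t j u) := by
  have hnot := h (Fin.insertNth (α := fun _ => Option (Fin 3)) t none (fun y => some (u y)))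
  rw [IsRainbowLine] at hnot
  push_neg at hnot
  have htmpl : IsLineTemplate (Fin.insertNth (α := fun _ => Option (Fin 3)) t none (fun y => some (u y))) :=
    ⟨t, by simp⟩
  have hni := hnot htmpl
  rw [Function.not_injective_iff] at hni
  obtain ⟨a, b, hab, hne⟩ := hni
  refine ⟨a, b, hne, ?_⟩
  have hl : ∀ (j : Fin 3),
      linePoint (Fin.insertNth (α := fun _ => Option (Fin 3)) t none (fun y => some (u y))) j
        = ins t j u := by
    intro j
    funext x
    rcases eq_or_ne x t with rfl | hx
    · simp [linePoint, ins]
    · obtain ⟨y, rfl⟩ := Fin.exists_succAbove_eq hx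
      simp [linePoint, ins]
  rwa [hl a, hl b] at hab


lemma IE3 (A B C : Finset ℕ) :
    (A ∪ B ∪ C).card + (A ∩ B).card + (A ∩ C).card + (B ∩ C).card
      = A.card + B.card + C.card + (A ∩ B ∩ C).card := by
  have h1 := Finset.card_union_add_card_inter (A ∪ B) C
  have h2 := Finset.card_union_add_card_inter A B
  have h3 := Finset.card_union_add_card_inter (A ∩ C) (B ∩ C)
  have e1 : (A ∪ B) ∩ C = (A ∩ C) ∪ (B ∩ C) := by
    ext x; simp only [Finset.mem_inter, Finset.mem_union]; tauto
  have e2 : (A ∩ C) ∩ (B ∩ C) = A ∩ B ∩ C := by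
    ext x; simp only [Finset.mem_inter, Finset.mem_union]; tauto
  rw [e1] at h1
  rw [e2] at h3
  omega

lemma card_univ_pt {m : ℕ} : Fintype.card (Pt m) = 3 ^ m := by
  simp [Fintype.card_fun]

lemma total_cells {m : ℕ} (c : Pt m → ℕ) :
    ∑ x ∈ colors c, (cells c x).card = 3 ^ m := by
  rw [colors]
  have : ∀ x, cells c x = Finset.univ.filter (fun v => c v = x) := fun _ => rfl
  simp only [this]
  rw [← Finset.card_eq_sum_card_fiberwise (fun v _ => Finset.mem_image_of_mem c (mem_univ v))]
  simp [card_univ, card_univ_pt]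

lemma sum_ge_two (s : Finset ℕ) (f : ℕ → ℕ) {a b : ℕ} (ha : a ∈ s) (hb : b ∈ s) (hab : a ≠ b)
    (h1 : ∀ x ∈ s, 1 ≤ f x) : f a + f b + (s.card - 2) ≤ ∑ x ∈ s, f x := by
  classical
  have hsub : {a, b} ⊆ s := by intro x hx; simp at hx; rcases hx with rfl | rfl <;> assumption
  rw [← Finset.sum_sdiff hsub]
  have h2 : ∑ x ∈ ({a, b} : Finset ℕ), f x = f a + f b := by
    rw [Finset.sum_insert (by simp [hab]), Finset.sum_singleton]
  have h3 : (s \ {a, b}).card ≤ ∑ x ∈ s \ {a, b}, f x := by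
    calc (s \ {a, b}).card = ∑ _x ∈ s \ {a, b}, 1 := by simp
    _ ≤ _ := Finset.sum_le_sum (fun x hx => h1 x (Finset.mem_sdiff.1 hx).1)
  have h4 : (s \ {a, b}).card = s.card - 2 := by
    rw [Finset.card_sdiff_of_subset hsub, Finset.card_insert_of_notMem (by simp [hab]), Finset.card_singleton]
  omega

lemma sum_ge_three (s : Finset ℕ) (f : ℕ → ℕ) {a b d : ℕ} (ha : a ∈ s) (hb : b ∈ s) (hd : d ∈ s)
    (hab : a ≠ b) (had : a ≠ d) (hbd : b ≠ d)
    (h1 : ∀ x ∈ s, 1 ≤ f x) : f a + f b + f d + (s.card - 3) ≤ ∑ x ∈ s, f x := by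
  classical
  have hsub : {a, b, d} ⊆ s := by intro x hx; simp at hx; rcases hx with rfl | rfl | rfl <;> assumption
  rw [← Finset.sum_sdiff hsub]
  have h2 : ∑ x ∈ ({a, b, d} : Finset ℕ), f x = f a + f b + f d := by
    rw [Finset.sum_insert (by simp [hab, had]), Finset.sum_insert (by simp [hbd]),
      Finset.sum_singleton]; ring
  have h3 : (s \ {a, b, d}).card ≤ ∑ x ∈ s \ {a, b, d}, f x := by
    calc (s \ {a, b, d}).card = ∑ _x ∈ s \ {a, b, d}, 1 := by simp
    _ ≤ _ := Finset.sum_le_sum (fun x hx => h1 x (Finset.mem_sdiff.1 hx).1)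
  have h4 : (s \ {a, b, d}).card = s.card - 3 := by
    rw [Finset.card_sdiff_of_subset hsub]
    have : ({a, b, d} : Finset ℕ).card = 3 := by
      rw [Finset.card_insert_of_notMem (by simp [hab, had]),
        Finset.card_insert_of_notMem (by simp [hbd]), Finset.card_singleton]
    omega
  omega

lemma CNT {m : ℕ} {c : Pt m → ℕ} {a K : ℕ} (ha : a ∈ colors c) (hK : K ≤ (cells c a).card) :
    (colors c).card + K ≤ 3 ^ m + 1 := by
  have htot := total_cells c
  have h2 : ∀ x ∈ colors c, 1 ≤ (cells c x).card := fun x hx => one_le_cells hx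
  have h3 := Finset.sum_le_sum (f := fun _ => 1) (g := fun x => (cells c x).card)
    (s := (colors c).erase a) (fun x hx => h2 x (Finset.mem_of_mem_erase hx))
  have h4 : ∑ x ∈ (colors c).erase a, (cells c x).card + (cells c a).card = 3 ^ m := by
    rw [Finset.sum_erase_add _ _ ha]; exact htot
  have h5 : ((colors c).erase a).card = (colors c).card - 1 := Finset.card_erase_of_mem ha
  simp only [Finset.sum_const, smul_eq_mul, mul_one] at h3
  have h6 : 1 ≤ (colors c).card := Finset.card_pos.2 ⟨a, ha⟩
  omega

lemma colors_union {n : ℕ} (c : Pt (n+1) → ℕ) (t : Fin (n+1)) :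
    colors c = colors (res c t 0) ∪ colors (res c t 1) ∪ colors (res c t 2) := by
  ext x
  simp only [Finset.mem_union, mem_colors]
  constructor
  · rintro ⟨v, rfl⟩
    rcases fin3_cases (v t) with h | h | h
    · exact Or.inl (Or.inl ⟨t.removeNth v, by rw [res, ← h, ins_removeNth]⟩)
    · exact Or.inl (Or.inr ⟨t.removeNth v, by rw [res, ← h, ins_removeNth]⟩)
    · exact Or.inr ⟨t.removeNth v, by rw [res, ← h, ins_removeNth]⟩
  · rintro ((⟨u, rfl⟩ | ⟨u, rfl⟩) | ⟨u, rfl⟩) <;> exact ⟨_, rfl⟩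

lemma res_colors_subset {n : ℕ} (c : Pt (n+1) → ℕ) (t : Fin (n+1)) (i : Fin 3) :
    colors (res c t i) ⊆ colors c := by
  intro x hx
  obtain ⟨u, rfl⟩ := mem_colors.1 hx
  exact mem_colors.2 ⟨_, rfl⟩

lemma S1 {n : ℕ} (c : Pt (n+1) → ℕ) (t : Fin (n+1)) :
    (colors c).card
      + (colors (res c t 0) ∩ colors (res c t 1)).card
      + (colors (res c t 0) ∩ colors (res c t 2)).card
      + (colors (res c t 1) ∩ colors (res c t 2)).card
      = (colors (res c t 0)).card + (colors (res c t 1)).card + (colors (res c t 2)).card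
        + (colors (res c t 0) ∩ colors (res c t 1) ∩ colors (res c t 2)).card := by
  rw [colors_union c t]
  exact IE3 _ _ _


lemma S2kill {n : ℕ} {c : Pt (n+1) → ℕ} (h : RainbowFree c) (t : Fin (n+1)) {i j k : Fin 3}
    (hij : i ≠ j) (hik : i ≠ k) (hjk : j ≠ k)
    (hD : colors (res c t i) ∩ colors (res c t j) = ∅) :
    (colors c).card ≤ (colors (res c t i)).card + (colors (res c t j)).card := by
  have hsub : ∀ z : Fin 3, colors (res c t z) ⊆ colors (res c t i) ∪ colors (res c t j) := by
    intro z x hx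
    rcases fin3_cover z hij hik hjk with rfl | rfl | rfl
    · exact Finset.mem_union_left _ hx
    · exact Finset.mem_union_right _ hx
    · -- the interesting case: z = k
      obtain ⟨u, rfl⟩ := mem_colors.1 hx
      obtain ⟨p, q, hpq, hc⟩ := column h t u
      have hmem : ∀ w : Fin 3, c (ins t w u) ∈ colors (res c t w) :=
        fun w => mem_colors.2 ⟨u, rfl⟩
      have hkey : ∀ p q : Fin 3, p ≠ q → c (ins t p u) = c (ins t q u) →
          res c t z u ∈ colors (res c t i) ∪ colors (res c t j) := by
        intro p q hpq hc
        have hdk : ∀ r : Fin 3, c (ins t r u) = c (ins t z u) →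
            res c t z u ∈ colors (res c t r) := by
          intro r hr
          have hzz : res c t z u = c (ins t r u) := by rw [res, hr]
          rw [hzz]; exact hmem r
        have hcontr : c (ins t i u) = c (ins t j u) → False := by
          intro hij'
          have h1 : c (ins t i u) ∈ colors (res c t i) := hmem i
          have h2 : c (ins t i u) ∈ colors (res c t j) := by rw [hij']; exact hmem j
          have hin : c (ins t i u) ∈ colors (res c t i) ∩ colors (res c t j) :=
            Finset.mem_inter.2 ⟨h1, h2⟩
          rw [hD] at hin; exact absurd hin (Finset.notMem_empty _)
        rcases fin3_cover p hij hik hjk with hp | hp | hp <;>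
          rcases fin3_cover q hij hik hjk with hq | hq | hq <;>
          rw [hp, hq] at hc
        · exact absurd (hp.trans hq.symm) hpq
        · exact absurd (hcontr hc) id
        · exact Finset.mem_union_left _ (hdk i hc)
        · exact absurd (hcontr hc.symm) id
        · exact absurd (hp.trans hq.symm) hpq
        · exact Finset.mem_union_right _ (hdk j hc)
        · exact Finset.mem_union_left _ (hdk i hc.symm)
        · exact Finset.mem_union_right _ (hdk j hc.symm)
        · exact absurd (hp.trans hq.symm) hpq
      exact hkey p q hpq hc
  have hunion : colors c ⊆ colors (res c t i) ∪ colors (res c t j) := by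
    rw [colors_union c t]
    intro x hx
    rcases Finset.mem_union.1 hx with hx' | hx'
    · rcases Finset.mem_union.1 hx' with hx'' | hx''
      · exact hsub 0 hx''
      · exact hsub 1 hx''
    · exact hsub 2 hx'
  calc (colors c).card ≤ (colors (res c t i) ∪ colors (res c t j)).card :=
        Finset.card_le_card hunion
  _ ≤ _ := Finset.card_union_le _ _

lemma doubled_cells {n : ℕ} {c : Pt (n+1) → ℕ} {t : Fin (n+1)} {a : ℕ}
    (h : ∀ u : Pt n, ∃ i j : Fin 3, i ≠ j ∧ c (ins t i u) = a ∧ c (ins t j u) = a) :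
    2 * 3 ^ n ≤ (cells c a).card := by
  have hfib := Finset.card_eq_sum_card_fiberwise
    (f := t.removeNth) (s := cells c a) (t := Finset.univ) (fun x _ => mem_univ _)
  have hbig : ∀ u : Pt n, 2 ≤ ((cells c a).filter (fun v => t.removeNth v = u)).card := by
    intro u
    obtain ⟨i, j, hij, h1, h2⟩ := h u
    have hpair : ({ins t i u, ins t j u} : Finset (Pt (n+1))) ⊆
        (cells c a).filter (fun v => t.removeNth v = u) := by
      intro v hv
      simp only [Finset.mem_insert, Finset.mem_singleton] at hv
      rcases hv with rfl | rfl <;>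
        · simp only [Finset.mem_filter, cells, Finset.mem_univ, true_and]
          constructor
          · first | exact h1 | exact h2
          · funext y; simp [Fin.removeNth]
    have hne : ins t i u ≠ ins t j u := by
      intro hcon
      have := congrFun hcon t
      simp at this
      exact hij this
    calc 2 = ({ins t i u, ins t j u} : Finset (Pt (n+1))).card := by
            rw [Finset.card_insert_of_notMem (by simp [hne]), Finset.card_singleton]
    _ ≤ _ := Finset.card_le_card hpair
  calc 2 * 3 ^ n = ∑ _u : Pt n, 2 := by simp [card_univ, card_univ_pt]; ring
  _ ≤ ∑ u : Pt n, ((cells c a).filter (fun v => t.removeNth v = u)).card :=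
      Finset.sum_le_sum (fun u _ => hbig u)
  _ = (cells c a).card := hfib.symm


lemma level_step {n : ℕ} (c : Pt (n+1) → ℕ) (h : RainbowFree c) (t : Fin (n+1)) (M : ℕ)
    (hM : ∀ i, (colors (res c t i)).card ≤ M)
    (hN : 2 * M + 1 ≤ (colors c).card)
    (hslack : 3 * M ≤ (colors c).card + 1) : False := by
  have hS1 := S1 c t
  have hT01 : (colors (res c t 0) ∩ colors (res c t 1) ∩ colors (res c t 2)).card
      ≤ (colors (res c t 0) ∩ colors (res c t 1)).card :=
    Finset.card_le_card (Finset.inter_subset_left)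
  have hT02 : (colors (res c t 0) ∩ colors (res c t 1) ∩ colors (res c t 2)).card
      ≤ (colors (res c t 0) ∩ colors (res c t 2)).card :=
    Finset.card_le_card (fun x hx => by
      simp only [Finset.mem_inter] at hx ⊢; exact ⟨hx.1.1, hx.2⟩)
  have hT12 : (colors (res c t 0) ∩ colors (res c t 1) ∩ colors (res c t 2)).card
      ≤ (colors (res c t 1) ∩ colors (res c t 2)).card :=
    Finset.card_le_card (fun x hx => by
      simp only [Finset.mem_inter] at hx ⊢; exact ⟨hx.1.2, hx.2⟩)
  have hM0 := hM 0; have hM1 := hM 1; have hM2 := hM 2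
  have hzero : (colors (res c t 0) ∩ colors (res c t 1)).card = 0
      ∨ (colors (res c t 0) ∩ colors (res c t 2)).card = 0
      ∨ (colors (res c t 1) ∩ colors (res c t 2)).card = 0 := by omega
  rcases hzero with h0 | h0 | h0
  · have := S2kill h t (i := 0) (j := 1) (k := 2) (by decide) (by decide) (by decide)
      (Finset.card_eq_zero.1 h0)
    omega
  · have := S2kill h t (i := 0) (j := 2) (k := 1) (by decide) (by decide) (by decide)
      (Finset.card_eq_zero.1 h0)
    omega
  · have := S2kill h t (i := 1) (j := 2) (k := 0) (by decide) (by decide) (by decide)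
      (Finset.card_eq_zero.1 h0)
    omega

lemma L1 (c : Pt 1 → ℕ) (h : RainbowFree c) : (colors c).card ≤ 2 := by
  have hnot := h (fun _ => none)
  rw [IsRainbowLine] at hnot
  push_neg at hnot
  have hni := hnot ⟨0, rfl⟩
  rw [Function.not_injective_iff] at hni
  obtain ⟨i, j, hcij, hij⟩ := hni
  have hlp : ∀ z : Fin 3, linePoint (fun _ : Fin 1 => (none : Option (Fin 3))) z = fun _ => z :=
    fun z => rfl
  rw [hlp i, hlp j] at hcij
  have hsub : colors c ⊆ Finset.image (fun z : Fin 3 => c (fun _ => z)) (Finset.univ.erase i) := by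
    intro x hx
    obtain ⟨v, rfl⟩ := mem_colors.1 hx
    have hv : v = fun _ => v 0 := funext fun z => by rw [Subsingleton.elim z 0]
    by_cases hv0 : v 0 = i
    · refine Finset.mem_image.2 ⟨j, Finset.mem_erase.2 ⟨fun hc => hij hc.symm, Finset.mem_univ _⟩, ?_⟩
      rw [hv, hv0, hcij]
    · exact Finset.mem_image.2 ⟨v 0, Finset.mem_erase.2 ⟨hv0, Finset.mem_univ _⟩, by rw [hv]⟩
  calc (colors c).card ≤ _ := Finset.card_le_card hsub
  _ ≤ (Finset.univ.erase i).card := Finset.card_image_le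
  _ = 2 := by rw [Finset.card_erase_of_mem (Finset.mem_univ _)]; simp

lemma L2 (c : Pt 2 → ℕ) (h : RainbowFree c) : (colors c).card ≤ 4 := by
  by_contra hN
  push_neg at hN
  exact level_step c h 0 2 (fun i => L1 _ (rf_res h 0 i)) (by omega) (by omega)

lemma L3a (c : Pt 3 → ℕ) (h : RainbowFree c) : (colors c).card ≤ 10 := by
  by_contra hN
  push_neg at hN
  exact level_step c h 0 4 (fun i => L2 _ (rf_res h 0 i)) (by omega) (by omega)


lemma L3b (c : Pt 3 → ℕ) (h : RainbowFree c) (hN : (colors c).card = 10) :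
    ∃ a ∈ colors c, 18 ≤ (cells c a).card := by
  have hS1 := S1 c 0
  have hM0 := L2 _ (rf_res h 0 0)
  have hM1 := L2 _ (rf_res h 0 1)
  have hM2 := L2 _ (rf_res h 0 2)
  have hT01 : (colors (res c 0 0) ∩ colors (res c 0 1) ∩ colors (res c 0 2)).card
      ≤ (colors (res c 0 0) ∩ colors (res c 0 1)).card :=
    Finset.card_le_card Finset.inter_subset_left
  have hT02 : (colors (res c 0 0) ∩ colors (res c 0 1) ∩ colors (res c 0 2)).card
      ≤ (colors (res c 0 0) ∩ colors (res c 0 2)).card :=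
    Finset.card_le_card (fun x hx => by
      simp only [Finset.mem_inter] at hx ⊢; exact ⟨hx.1.1, hx.2⟩)
  have hT12 : (colors (res c 0 0) ∩ colors (res c 0 1) ∩ colors (res c 0 2)).card
      ≤ (colors (res c 0 1) ∩ colors (res c 0 2)).card :=
    Finset.card_le_card (fun x hx => by
      simp only [Finset.mem_inter] at hx ⊢; exact ⟨hx.1.2, hx.2⟩)
  -- case T = 0 is impossible
  have hTpos : 1 ≤ (colors (res c 0 0) ∩ colors (res c 0 1) ∩ colors (res c 0 2)).card := by
    by_contra hT0
    push_neg at hT0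
    have hzero : (colors (res c 0 0) ∩ colors (res c 0 1)).card = 0
        ∨ (colors (res c 0 0) ∩ colors (res c 0 2)).card = 0
        ∨ (colors (res c 0 1) ∩ colors (res c 0 2)).card = 0 := by omega
    rcases hzero with h0 | h0 | h0
    · have := S2kill h 0 (i := 0) (j := 1) (k := 2) (by decide) (by decide) (by decide)
        (Finset.card_eq_zero.1 h0)
      omega
    · have := S2kill h 0 (i := 0) (j := 2) (k := 1) (by decide) (by decide) (by decide)
        (Finset.card_eq_zero.1 h0)
      omega
    · have := S2kill h 0 (i := 1) (j := 2) (k := 0) (by decide) (by decide) (by decide)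
        (Finset.card_eq_zero.1 h0)
      omega
  -- now T = 1 and all pairwise intersections have card 1
  have hp01 : (colors (res c 0 0) ∩ colors (res c 0 1)).card = 1 := by omega
  have hp02 : (colors (res c 0 0) ∩ colors (res c 0 2)).card = 1 := by omega
  have hp12 : (colors (res c 0 1) ∩ colors (res c 0 2)).card = 1 := by omega
  have hT1 : (colors (res c 0 0) ∩ colors (res c 0 1) ∩ colors (res c 0 2)).card = 1 := by omega
  obtain ⟨a, hTa⟩ := Finset.card_eq_one.1 hT1
  have haT : a ∈ colors (res c 0 0) ∩ colors (res c 0 1) ∩ colors (res c 0 2) := by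
    rw [hTa]; exact Finset.mem_singleton_self a
  simp only [Finset.mem_inter] at haT
  have h01 : colors (res c 0 0) ∩ colors (res c 0 1) = {a} :=
    (Finset.eq_of_subset_of_card_le
      (Finset.singleton_subset_iff.2 (Finset.mem_inter.2 ⟨haT.1.1, haT.1.2⟩))
      (by simp only [Finset.card_singleton]; omega)).symm
  have h02 : colors (res c 0 0) ∩ colors (res c 0 2) = {a} :=
    (Finset.eq_of_subset_of_card_le
      (Finset.singleton_subset_iff.2 (Finset.mem_inter.2 ⟨haT.1.1, haT.2⟩))
      (by simp only [Finset.card_singleton]; omega)).symm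
  have h12 : colors (res c 0 1) ∩ colors (res c 0 2) = {a} :=
    (Finset.eq_of_subset_of_card_le
      (Finset.singleton_subset_iff.2 (Finset.mem_inter.2 ⟨haT.1.2, haT.2⟩))
      (by simp only [Finset.card_singleton]; omega)).symm
  have hIJ : ∀ i j : Fin 3, i ≠ j →
      colors (res c 0 i) ∩ colors (res c 0 j) = {a} := by
    intro i j hij
    rcases fin3_cases i with rfl | rfl | rfl <;> rcases fin3_cases j with rfl | rfl | rfl
    · exact (hij rfl).elim
    · exact h01
    · exact h02
    · exact (Finset.inter_comm _ _).trans h01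
    · exact (hij rfl).elim
    · exact h12
    · exact (Finset.inter_comm _ _).trans h02
    · exact (Finset.inter_comm _ _).trans h12
    · exact (hij rfl).elim
  have hdouble : ∀ u : Pt 2, ∃ i j : Fin 3, i ≠ j ∧ c (ins 0 i u) = a ∧ c (ins 0 j u) = a := by
    intro u
    obtain ⟨i, j, hij, hc⟩ := column h 0 u
    have hin : c (ins 0 i u) ∈ colors (res c 0 i) ∩ colors (res c 0 j) :=
      Finset.mem_inter.2 ⟨mem_colors.2 ⟨u, rfl⟩, by rw [hc]; exact mem_colors.2 ⟨u, rfl⟩⟩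
    rw [hIJ i j hij] at hin
    have hia := Finset.mem_singleton.1 hin
    exact ⟨i, j, hij, hia, by rw [← hc]; exact hia⟩
  refine ⟨a, ?_, ?_⟩
  · exact res_colors_subset c 0 0 haT.1.1
  · exact doubled_cells hdouble

lemma P10L (c : Pt 3 → ℕ) (h : RainbowFree c) (hN : (colors c).card = 10)
    {x y : ℕ} (hxy : x ≠ y) (hx : 2 ≤ (cells c x).card) (hy : 2 ≤ (cells c y).card) : False := by
  obtain ⟨a, ha, h18⟩ := L3b c h hN
  have htot := total_cells c
  have hxm : x ∈ colors c := mem_colors_of_cells (by omega)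
  have hym : y ∈ colors c := mem_colors_of_cells (by omega)
  have h1 : ∀ z ∈ colors c, 1 ≤ (cells c z).card := fun z hz => one_le_cells hz
  by_cases hax : a = x
  · subst hax
    have h2 : (cells c a).card + (cells c y).card + ((colors c).card - 2)
        ≤ ∑ z ∈ colors c, (cells c z).card :=
      sum_ge_two (colors c) (fun z => (cells c z).card) ha hym hxy h1
    omega
  by_cases hay : a = y
  · subst hay
    have h2 : (cells c a).card + (cells c x).card + ((colors c).card - 2)
        ≤ ∑ z ∈ colors c, (cells c z).card :=
      sum_ge_two (colors c) (fun z => (cells c z).card) ha hxm (fun hc => hxy hc.symm) h1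
    omega
  · have h2 : (cells c a).card + (cells c x).card + (cells c y).card + ((colors c).card - 3)
        ≤ ∑ z ∈ colors c, (cells c z).card :=
      sum_ge_three (colors c) (fun z => (cells c z).card) ha hxm hym hax hay hxy h1
    omega


theorem final (c : Pt 4 → ℕ) (hrf : RainbowFree c) (hcard : (colors c).card = 27) (t : Fin 4) :
    (colors (res c t 0) ∩ colors (res c t 1) ∩ colors (res c t 2)).card = 1 := by
  have hS1 := S1 c t
  have hM0 := L3a _ (rf_res hrf t 0)
  have hM1 := L3a _ (rf_res hrf t 1)
  have hM2 := L3a _ (rf_res hrf t 2)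
  have hT01 : (colors (res c t 0) ∩ colors (res c t 1) ∩ colors (res c t 2)).card
      ≤ (colors (res c t 0) ∩ colors (res c t 1)).card :=
    Finset.card_le_card Finset.inter_subset_left
  have hT02 : (colors (res c t 0) ∩ colors (res c t 1) ∩ colors (res c t 2)).card
      ≤ (colors (res c t 0) ∩ colors (res c t 2)).card :=
    Finset.card_le_card (fun x hx => by
      simp only [Finset.mem_inter] at hx ⊢; exact ⟨hx.1.1, hx.2⟩)
  have hT12 : (colors (res c t 0) ∩ colors (res c t 1) ∩ colors (res c t 2)).card
      ≤ (colors (res c t 1) ∩ colors (res c t 2)).card :=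
    Finset.card_le_card (fun x hx => by
      simp only [Finset.mem_inter] at hx ⊢; exact ⟨hx.1.2, hx.2⟩)
  have hTpos : 1 ≤ (colors (res c t 0) ∩ colors (res c t 1) ∩ colors (res c t 2)).card := by
    by_contra hT0
    push_neg at hT0
    by_cases h0 : (colors (res c t 0) ∩ colors (res c t 1)).card = 0
      ∨ (colors (res c t 0) ∩ colors (res c t 2)).card = 0
      ∨ (colors (res c t 1) ∩ colors (res c t 2)).card = 0
    · rcases h0 with h0 | h0 | h0
      · have := S2kill hrf t (i := 0) (j := 1) (k := 2) (by decide) (by decide) (by decide)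
          (Finset.card_eq_zero.1 h0)
        omega
      · have := S2kill hrf t (i := 0) (j := 2) (k := 1) (by decide) (by decide) (by decide)
          (Finset.card_eq_zero.1 h0)
        omega
      · have := S2kill hrf t (i := 1) (j := 2) (k := 0) (by decide) (by decide) (by decide)
          (Finset.card_eq_zero.1 h0)
        omega
    · push_neg at h0
      obtain ⟨hn01, hn02, hn12⟩ := h0
      -- all three pairwise intersections are singletons
      have hp01 : (colors (res c t 0) ∩ colors (res c t 1)).card = 1 := by omega
      have hp02 : (colors (res c t 0) ∩ colors (res c t 2)).card = 1 := by omega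
      have hp12 : (colors (res c t 1) ∩ colors (res c t 2)).card = 1 := by omega
      have hC0 : (colors (res c t 0)).card = 10 := by omega
      have hC1 : (colors (res c t 1)).card = 10 := by omega
      have hC2 : (colors (res c t 2)).card = 10 := by omega
      obtain ⟨a, ha⟩ := Finset.card_eq_one.1 hp01
      obtain ⟨b, hb⟩ := Finset.card_eq_one.1 hp02
      obtain ⟨d, hd⟩ := Finset.card_eq_one.1 hp12
      have haC : a ∈ colors (res c t 0) ∩ colors (res c t 1) := by
        rw [ha]; exact Finset.mem_singleton_self a
      have hbC : b ∈ colors (res c t 0) ∩ colors (res c t 2) := by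
        rw [hb]; exact Finset.mem_singleton_self b
      have hdC : d ∈ colors (res c t 1) ∩ colors (res c t 2) := by
        rw [hd]; exact Finset.mem_singleton_self d
      rw [Finset.mem_inter] at haC hbC hdC
      have hTmem : ∀ x : ℕ, x ∈ colors (res c t 0) → x ∈ colors (res c t 1) →
          x ∈ colors (res c t 2) → False := by
        intro x h1 h2 h3
        have : x ∈ colors (res c t 0) ∩ colors (res c t 1) ∩ colors (res c t 2) :=
          Finset.mem_inter.2 ⟨Finset.mem_inter.2 ⟨h1, h2⟩, h3⟩
        have := Finset.card_pos.2 ⟨x, this⟩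
        omega
      have hab : a ≠ b := fun he => hTmem a haC.1 haC.2 (he ▸ hbC.2)
      have had : a ≠ d := fun he => hTmem a haC.1 haC.2 (he ▸ hdC.2)
      have hbd : b ≠ d := fun he => hTmem b hbC.1 (he ▸ hdC.1) hbC.2
      -- the three sets of columns
      set A := Finset.univ.filter (fun u : Pt 3 => c (ins t 0 u) = a ∧ c (ins t 1 u) = a) with hA
      set B := Finset.univ.filter (fun u : Pt 3 => c (ins t 0 u) = b ∧ c (ins t 2 u) = b) with hB
      set D := Finset.univ.filter (fun u : Pt 3 => c (ins t 1 u) = d ∧ c (ins t 2 u) = d) with hD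
      have hcover : (Finset.univ : Finset (Pt 3)) ⊆ A ∪ B ∪ D := by
        intro u _
        obtain ⟨p, q, hpq, hc⟩ := column hrf t u
        have hval : ∀ w : Fin 3, c (ins t w u) ∈ colors (res c t w) :=
          fun w => mem_colors.2 ⟨u, rfl⟩
        have hmemA : c (ins t 0 u) = c (ins t 1 u) → u ∈ A ∪ B ∪ D := by
          intro hc'
          have : c (ins t 0 u) ∈ colors (res c t 0) ∩ colors (res c t 1) :=
            Finset.mem_inter.2 ⟨hval 0, hc' ▸ hval 1⟩
          rw [ha, Finset.mem_singleton] at this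
          exact Finset.mem_union_left _ (Finset.mem_union_left _
            (Finset.mem_filter.2 ⟨Finset.mem_univ _, this, hc' ▸ this⟩))
        have hmemB : c (ins t 0 u) = c (ins t 2 u) → u ∈ A ∪ B ∪ D := by
          intro hc'
          have : c (ins t 0 u) ∈ colors (res c t 0) ∩ colors (res c t 2) :=
            Finset.mem_inter.2 ⟨hval 0, hc' ▸ hval 2⟩
          rw [hb, Finset.mem_singleton] at this
          exact Finset.mem_union_left _ (Finset.mem_union_right _
            (Finset.mem_filter.2 ⟨Finset.mem_univ _, this, hc' ▸ this⟩))
        have hmemD : c (ins t 1 u) = c (ins t 2 u) → u ∈ A ∪ B ∪ D := by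
          intro hc'
          have : c (ins t 1 u) ∈ colors (res c t 1) ∩ colors (res c t 2) :=
            Finset.mem_inter.2 ⟨hval 1, hc' ▸ hval 2⟩
          rw [hd, Finset.mem_singleton] at this
          exact Finset.mem_union_right _
            (Finset.mem_filter.2 ⟨Finset.mem_univ _, this, hc' ▸ this⟩)
        rcases fin3_cases p with hp | hp | hp <;> rcases fin3_cases q with hq | hq | hq <;>
          rw [hp, hq] at hc hpq
        · exact absurd rfl hpq
        · exact hmemA hc
        · exact hmemB hc
        · exact hmemA hc.symm
        · exact absurd rfl hpq
        · exact hmemD hc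
        · exact hmemB hc.symm
        · exact hmemD hc.symm
        · exact absurd rfl hpq
      have hcardsum : 27 ≤ A.card + B.card + D.card := by
        have h27 : (Finset.univ : Finset (Pt 3)).card = 27 := by
          rw [Finset.card_univ, card_univ_pt]; norm_num
        calc (27 : ℕ) = (Finset.univ : Finset (Pt 3)).card := h27.symm
        _ ≤ (A ∪ B ∪ D).card := Finset.card_le_card hcover
        _ ≤ (A ∪ B).card + D.card := Finset.card_union_le _ _
        _ ≤ A.card + B.card + D.card := by
            have := Finset.card_union_le A B
            omega
      -- helper: A is contained in cells of the layer colorings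
      have hsubA0 : A ⊆ cells (res c t 0) a :=
        fun u hu => Finset.mem_filter.2 ⟨Finset.mem_univ _, (Finset.mem_filter.1 hu).2.1⟩
      have hsubA1 : A ⊆ cells (res c t 1) a :=
        fun u hu => Finset.mem_filter.2 ⟨Finset.mem_univ _, (Finset.mem_filter.1 hu).2.2⟩
      have hsubB0 : B ⊆ cells (res c t 0) b :=
        fun u hu => Finset.mem_filter.2 ⟨Finset.mem_univ _, (Finset.mem_filter.1 hu).2.1⟩
      have hsubB2 : B ⊆ cells (res c t 2) b :=
        fun u hu => Finset.mem_filter.2 ⟨Finset.mem_univ _, (Finset.mem_filter.1 hu).2.2⟩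
      have hsubD1 : D ⊆ cells (res c t 1) d :=
        fun u hu => Finset.mem_filter.2 ⟨Finset.mem_univ _, (Finset.mem_filter.1 hu).2.1⟩
      have hsubD2 : D ⊆ cells (res c t 2) d :=
        fun u hu => Finset.mem_filter.2 ⟨Finset.mem_univ _, (Finset.mem_filter.1 hu).2.2⟩
      have hAB : A.card ≤ 1 ∨ B.card ≤ 1 := by
        by_contra hcon
        push_neg at hcon
        exact P10L _ (rf_res hrf t 0) hC0 hab
          (le_trans hcon.1 (Finset.card_le_card hsubA0))
          (le_trans hcon.2 (Finset.card_le_card hsubB0))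
      have hAD : A.card ≤ 1 ∨ D.card ≤ 1 := by
        by_contra hcon
        push_neg at hcon
        exact P10L _ (rf_res hrf t 1) hC1 had
          (le_trans hcon.1 (Finset.card_le_card hsubA1))
          (le_trans hcon.2 (Finset.card_le_card hsubD1))
      have hBD : B.card ≤ 1 ∨ D.card ≤ 1 := by
        by_contra hcon
        push_neg at hcon
        exact P10L _ (rf_res hrf t 2) hC2 hbd
          (le_trans hcon.1 (Finset.card_le_card hsubB2))
          (le_trans hcon.2 (Finset.card_le_card hsubD2))
      have hbig : 25 ≤ A.card ∨ 25 ≤ B.card ∨ 25 ≤ D.card := by omega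
      rcases hbig with hbig | hbig | hbig
      · have := CNT (c := res c t 0) (a := a) (K := 25) haC.1
          (le_trans hbig (Finset.card_le_card hsubA0))
        simp only [pow_succ, pow_zero] at this
        omega
      · have := CNT (c := res c t 0) (a := b) (K := 25) hbC.1
          (le_trans hbig (Finset.card_le_card hsubB0))
        simp only [pow_succ, pow_zero] at this
        omega
      · have := CNT (c := res c t 1) (a := d) (K := 25) hdC.1
          (le_trans hbig (Finset.card_le_card hsubD1))
        simp only [pow_succ, pow_zero] at this
        omega
  omega

end AHJ15


theorem stmt_15 (c : (Fin 4 → Fin 3) → ℕ) (hrf : RainbowFree c)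
    (huse : UsesExactly c 27) (t : Fin 4) :
    (⋂ i : Fin 3, layerColors c t i).ncard = 1 := by
  classical
  have hcard : (AHJ15.colors c).card = 27 := by
    have hr : Set.range c = ↑(AHJ15.colors c) := by
      rw [AHJ15.colors, Finset.coe_image, Finset.coe_univ, Set.image_univ]
    rw [UsesExactly, hr, Set.ncard_coe_finset] at huse
    exact huse
  have hmain := AHJ15.final c hrf hcard t
  have hlayer : ∀ i : Fin 3, layerColors c t i = ↑(AHJ15.colors (AHJ15.res c t i)) := by
    intro i
    ext x
    constructor
    · rintro ⟨v, hvt, rfl⟩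
      refine Finset.mem_coe.2 (AHJ15.mem_colors.2 ⟨t.removeNth v, ?_⟩)
      show c (AHJ15.ins t i (t.removeNth v)) = c v
      rw [← hvt, AHJ15.ins_removeNth]
    · intro hx
      obtain ⟨u, hu⟩ := AHJ15.mem_colors.1 (Finset.mem_coe.1 hx)
      exact ⟨AHJ15.ins t i u, by simp, hu⟩
  have hset : (⋂ i : Fin 3, layerColors c t i)
      = ↑(AHJ15.colors (AHJ15.res c t 0) ∩ AHJ15.colors (AHJ15.res c t 1)
          ∩ AHJ15.colors (AHJ15.res c t 2)) := by
    ext x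
    simp only [Set.mem_iInter, hlayer, Finset.mem_coe, Finset.coe_inter, Set.mem_inter_iff]
    constructor
    · intro h
      exact ⟨⟨h 0, h 1⟩, h 2⟩
    · rintro ⟨⟨h0, h1⟩, h2⟩ i
      rcases AHJ15.fin3_cases i with rfl | rfl | rfl
      · exact h0
      · exact h1
      · exact h2
  rw [hset, Set.ncard_coe_finset, hmain]
end
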